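/- Let h(z) = ∑_{k=0}^∞ a_k z^k and g(z) = ∑_{k=0}^∞ b_k z^k be analytic functions on the unit disk 𝔻 satisfying |h(z)| + |g(z)| ≤ 1 for all z ∈ 𝔻. Then for every integer n ≥ 1, √(|a_n|² + |b_n|²) ≤ 1 − |a_0|² − |b_0|². -/

import Mathlib

/-!
If `f = ∑ cₖ zᵏ` satisfies `|f| ≤ 1` on the unit disk, then Wiener's inequality
`|cₙ| ≤ 1 - |c₀|²` is the Schwarz–Pick bound at `0` when `n = 1`. For general `n`, averaging `f`
over the rotations `z ↦ ωʲ z` by the `n`-th roots of unity and substituting `z = w^(1/n)` gives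
a function bounded by `1` with Taylor coefficients `c_{nm}`, to which the case `n = 1` applies.

For the pair, `|h + s g| ≤ |h| + |g| ≤ 1` whenever `|s| = 1`. Take `s = ±ω` with `ω` chosen so
that `|aₙ + ω bₙ| = |aₙ - ω bₙ|`; by the parallelogram law both equal `√(|aₙ|² + |bₙ|²)`, and
adding the two Wiener inequalities turns `|a₀ + ω b₀|² + |a₀ - ω b₀|²` into `2 (|a₀|² + |b₀|²)`.
-/

open Complex ComplexConjugate Metric Set Filter Topology

noncomputable def diskMobius (β w : ℂ) : ℂ := (w - β) / (1 - conj β * w)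

theorem one_sub_conj_mul_ne_zero {β w : ℂ} (hβ : ‖β‖ < 1) (hw : ‖w‖ ≤ 1) :
    1 - conj β * w ≠ 0 := by
  rw [sub_ne_zero]
  intro h
  have := congrArg norm h
  rw [norm_one, norm_mul, RCLike.norm_conj] at this
  nlinarith [norm_nonneg β, norm_nonneg w]

theorem normSq_one_sub_conj_mul_sub_normSq_sub (β w : ℂ) :
    normSq (1 - conj β * w) - normSq (w - β) = (1 - normSq β) * (1 - normSq w) := by
  simp only [normSq_apply, sub_re, sub_im, mul_re, mul_im, one_re, one_im, conj_re, conj_im]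
  ring

theorem norm_diskMobius_lt_one {β w : ℂ} (hβ : ‖β‖ < 1) (hw : ‖w‖ < 1) :
    ‖diskMobius β w‖ < 1 := by
  have hsq : ‖w - β‖ ^ 2 < ‖1 - conj β * w‖ ^ 2 := by
    have h1 : normSq β < 1 := by rw [← Complex.sq_norm]; nlinarith [norm_nonneg β]
    have h2 : normSq w < 1 := by rw [← Complex.sq_norm]; nlinarith [norm_nonneg w]
    rw [Complex.sq_norm, Complex.sq_norm]
    nlinarith [normSq_one_sub_conj_mul_sub_normSq_sub β w]
  rw [diskMobius, norm_div, div_lt_one (norm_pos_iff.mpr (one_sub_conj_mul_ne_zero hβ hw.le))]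
  exact lt_of_pow_lt_pow_left₀ 2 (norm_nonneg _) hsq

theorem differentiableAt_diskMobius {β w : ℂ} (hβ : ‖β‖ < 1) (hw : ‖w‖ < 1) :
    DifferentiableAt ℂ (diskMobius β) w :=
  ((differentiableAt_id.sub_const β).div ((differentiableAt_id.const_mul _).const_sub 1)
    (one_sub_conj_mul_ne_zero hβ hw.le))

theorem hasDerivAt_diskMobius {β : ℂ} (hβ : ‖β‖ < 1) :
    HasDerivAt (diskMobius β) (((1 - ‖β‖ ^ 2 : ℝ) : ℂ)⁻¹) β := by
  have hden : 1 - conj β * β = ((1 - ‖β‖ ^ 2 : ℝ) : ℂ) := by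
    rw [← normSq_eq_conj_mul_self, ← Complex.sq_norm]; push_cast; ring
  have h : HasDerivAt (diskMobius β)
      ((1 * (1 - conj β * β) - (β - β) * -(conj β * 1)) / (1 - conj β * β) ^ 2) β :=
    ((hasDerivAt_id β).sub_const β).div
      (((hasDerivAt_id β).const_mul (conj β)).const_sub 1) (one_sub_conj_mul_ne_zero hβ hβ.le)
  rwa [sub_self, zero_mul, sub_zero, one_mul, sq, div_mul_eq_div_div,
    div_self (one_sub_conj_mul_ne_zero hβ hβ.le), one_div, hden] at h

theorem norm_deriv_zero_le_one_sub_sq_of_mapsTo_ball {F : ℂ → ℂ}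
    (hd : DifferentiableOn ℂ F (ball 0 1)) (hmaps : MapsTo F (ball 0 1) (ball 0 1)) :
    ‖deriv F 0‖ ≤ 1 - ‖F 0‖ ^ 2 := by
  set β := F 0
  have hβ : ‖β‖ < 1 := by simpa using hmaps (mem_ball_self one_pos)
  have hpos : 0 < 1 - ‖β‖ ^ 2 := by nlinarith [norm_nonneg β]
  have hF : HasDerivAt F (deriv F 0) 0 :=
    (hd.differentiableAt (ball_mem_nhds 0 one_pos)).hasDerivAt
  have hcomp := (hasDerivAt_diskMobius hβ).comp (0 : ℂ) hF
  have hschwarz : ‖deriv (diskMobius β ∘ F) 0‖ ≤ 1 := by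
    refine norm_deriv_le_one_of_mapsTo_ball (fun z hz => ?_) (fun z hz => ?_) one_pos
    · have hz' := hmaps hz
      rw [mem_ball_zero_iff] at hz'
      exact (differentiableAt_diskMobius hβ hz').comp_differentiableWithinAt z (hd z hz)
    · have hz' := hmaps hz
      rw [mem_ball_zero_iff] at hz'
      simpa [diskMobius, β] using (norm_diskMobius_lt_one hβ hz').le
  rw [hcomp.deriv, norm_mul, norm_inv, norm_real, Real.norm_of_nonneg hpos.le,
    inv_mul_le_iff₀ hpos, mul_one] at hschwarz
  exact hschwarz

theorem IsPrimitiveRoot.sum_pow_pow_eq_ite {R : Type*} [CommRing R] [IsDomain R] {ω : R} {n : ℕ}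
    (hω : IsPrimitiveRoot ω n) (k : ℕ) :
    ∑ j ∈ Finset.range n, (ω ^ j) ^ k = if n ∣ k then (n : R) else 0 := by
  simp_rw [← pow_mul, mul_comm _ k, pow_mul]
  split_ifs with hk
  · simp [(hω.pow_eq_one_iff_dvd k).mpr hk]
  · have hne : ω ^ k - 1 ≠ 0 := sub_ne_zero.mpr fun h => hk ((hω.pow_eq_one_iff_dvd k).mp h)
    apply mul_right_cancel₀ hne
    rw [geom_sum_mul, ← pow_mul, mul_comm, pow_mul, hω.pow_eq_one, one_pow, sub_self, zero_mul]

section TaylorSeries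

variable {c : ℕ → ℂ} {f : ℂ → ℂ}

theorem hasFPowerSeriesOnBall_ofScalars_of_hasSum
    (hf : ∀ z : ℂ, ‖z‖ < 1 → HasSum (fun k => c k * z ^ k) (f z)) :
    HasFPowerSeriesOnBall f (FormalMultilinearSeries.ofScalars ℂ c) 0 1 where
  r_le := by
    refine ENNReal.le_of_forall_nnreal_lt fun r hr => ?_
    refine FormalMultilinearSeries.le_radius_of_summable _ ?_
    have hr1 : ‖(r : ℂ)‖ < 1 := by simpa using hr
    simpa [FormalMultilinearSeries.ofScalars_norm] using
      summable_norm_iff.mpr (hf r hr1).summable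
  r_pos := one_pos
  hasSum hy := by
    rw [← ENNReal.ofReal_one, eball_ofReal, mem_ball_zero_iff] at hy
    simpa [FormalMultilinearSeries.ofScalars_apply_eq, mul_comm] using hf _ hy

theorem norm_coeff_one_le_one_sub_sq
    (hf : ∀ z : ℂ, ‖z‖ < 1 → HasSum (fun k => c k * z ^ k) (f z))
    (hb : ∀ z : ℂ, ‖z‖ < 1 → ‖f z‖ ≤ 1) :
    ‖c 1‖ ≤ 1 - ‖c 0‖ ^ 2 := by
  have hps := hasFPowerSeriesOnBall_ofScalars_of_hasSum hf
  have hd : DifferentiableOn ℂ f (ball 0 1) := by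
    simpa [← ENNReal.ofReal_one, eball_ofReal] using hps.differentiableOn
  have hf0 : f 0 = c 0 := by
    simpa using (hps.coeff_zero fun _ => 0).symm
  have hf' : HasDerivAt f (c 1) 0 := by
    simpa using hps.hasFPowerSeriesAt.hasDerivAt
  -- Schwarz–Pick applies to `t • f` only for `t < 1`, since `f` may touch the unit circle.
  have hscaled : ∀ t ∈ Ioo (0 : ℝ) 1, t * ‖c 1‖ ≤ 1 - t ^ 2 * ‖c 0‖ ^ 2 := by
    rintro t ⟨ht0, ht1⟩
    have hmaps : MapsTo (fun z => (t : ℂ) * f z) (ball 0 1) (ball 0 1) := fun z hz => by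
      rw [mem_ball_zero_iff] at hz ⊢
      rw [norm_mul, norm_real, Real.norm_of_nonneg ht0.le]
      nlinarith [hb z hz, norm_nonneg (f z)]
    have := norm_deriv_zero_le_one_sub_sq_of_mapsTo_ball (hd.const_mul _) hmaps
    rwa [(hf'.const_mul (t : ℂ)).deriv, hf0, norm_mul, norm_mul, norm_real,
      Real.norm_of_nonneg ht0.le, mul_pow] at this
  have hclosure : (1 : ℝ) ∈ closure (Ioo 0 1) := by
    rw [closure_Ioo zero_ne_one]; exact right_mem_Icc.mpr zero_le_one
  simpa using ContinuousWithinAt.closure_le hclosure (by fun_prop) (by fun_prop) hscaled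

theorem hasSum_average_comp_rootsOfUnity
    (hf : ∀ z : ℂ, ‖z‖ < 1 → HasSum (fun k => c k * z ^ k) (f z))
    {ω : ℂ} {n : ℕ} (hω : IsPrimitiveRoot ω n) (hn : n ≠ 0) {z : ℂ} (hz : ‖z‖ < 1) :
    HasSum (fun m => c (n * m) * (z ^ n) ^ m) ((∑ j ∈ Finset.range n, f (ω ^ j * z)) / n) := by
  have hωz : ∀ j, ‖ω ^ j * z‖ < 1 := fun j => by
    rwa [norm_mul, norm_pow, hω.norm'_eq_one hn, one_pow, one_mul]
  have hsum := (hasSum_sum (s := Finset.range n) fun j _ => hf _ (hωz j)).div_const (n : ℂ)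
  have hterm : ∀ k, (∑ j ∈ Finset.range n, c k * (ω ^ j * z) ^ k) / n =
      if n ∣ k then c k * z ^ k else 0 := fun k => by
    have hsplit : ∀ j, c k * (ω ^ j * z) ^ k = c k * z ^ k * (ω ^ j) ^ k := fun j => by ring
    simp_rw [hsplit, ← Finset.mul_sum, hω.sum_pow_pow_eq_ite]
    split_ifs <;> simp [hn]
  simp_rw [hterm] at hsum
  have hinj : Function.Injective (n * ·) := fun _ _ => (Nat.eq_of_mul_eq_mul_left (by omega) ·)
  rw [← hinj.hasSum_iff fun k hk => if_neg fun ⟨m, hm⟩ => hk ⟨m, hm.symm⟩] at hsum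
  simpa [Function.comp_def, pow_mul] using hsum

theorem norm_coeff_le_one_sub_sq
    (hf : ∀ z : ℂ, ‖z‖ < 1 → HasSum (fun k => c k * z ^ k) (f z))
    (hb : ∀ z : ℂ, ‖z‖ < 1 → ‖f z‖ ≤ 1) {n : ℕ} (hn : n ≠ 0) :
    ‖c n‖ ≤ 1 - ‖c 0‖ ^ 2 := by
  obtain ⟨ω, hω⟩ : ∃ ω : ℂ, IsPrimitiveRoot ω n := ⟨_, isPrimitiveRoot_exp n hn⟩
  set G : ℂ → ℂ := fun w => (∑ j ∈ Finset.range n, f (ω ^ j * w ^ (n⁻¹ : ℂ))) / n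
  have hroot : ∀ w : ℂ, ‖w‖ < 1 → ‖w ^ (n⁻¹ : ℂ)‖ < 1 := fun w hw => by
    rw [norm_cpow_inv_nat]
    exact Real.rpow_lt_one (norm_nonneg w) hw (by positivity)
  have hG : ∀ w : ℂ, ‖w‖ < 1 → HasSum (fun m => c (n * m) * w ^ m) (G w) := fun w hw => by
    simpa [cpow_nat_inv_pow w hn] using hasSum_average_comp_rootsOfUnity hf hω hn (hroot w hw)
  have hGb : ∀ w : ℂ, ‖w‖ < 1 → ‖G w‖ ≤ 1 := fun w hw => by
    have hωw : ∀ j, ‖ω ^ j * w ^ (n⁻¹ : ℂ)‖ < 1 := fun j => by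
      rw [norm_mul, norm_pow, hω.norm'_eq_one hn, one_pow, one_mul]; exact hroot w hw
    rw [norm_div, Complex.norm_natCast, div_le_one (by positivity)]
    calc ‖∑ j ∈ Finset.range n, f (ω ^ j * w ^ (n⁻¹ : ℂ))‖
        ≤ ∑ j ∈ Finset.range n, ‖f (ω ^ j * w ^ (n⁻¹ : ℂ))‖ := norm_sum_le _ _
      _ ≤ ∑ _j ∈ Finset.range n, 1 := Finset.sum_le_sum fun j _ => hb _ (hωw j)
      _ = n := by simp
  simpa using norm_coeff_one_le_one_sub_sq hG hGb

end TaylorSeries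

theorem exists_norm_eq_one_norm_add_mul_eq_norm_sub_mul (x y : ℂ) :
    ∃ ω : ℂ, ‖ω‖ = 1 ∧ ‖x + ω * y‖ = ‖x - ω * y‖ := by
  set u := conj x * y
  -- `ω` rotates `x̄ y` onto the imaginary axis, so the cross term `2 Re (x̄ ω y)` vanishes.
  set ω := I * exp ((-arg u : ℝ) * I)
  refine ⟨ω, by rw [norm_mul, norm_I, one_mul, norm_exp_ofReal_mul_I], ?_⟩
  have hrot : conj x * (ω * y) = I * ‖u‖ := by
    calc conj x * (ω * y) = ω * (‖u‖ * exp (arg u * I)) := by rw [norm_mul_exp_arg_mul_I]; ring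
      _ = I * ‖u‖ * (exp ((-arg u : ℝ) * I) * exp (arg u * I)) := by ring
      _ = I * ‖u‖ := by rw [← exp_add]; simp
  have hcross : (x * conj (ω * y)).re = 0 := by
    rw [← conj_re, map_mul, conj_conj, hrot]; simp
  rw [← sq_eq_sq₀ (norm_nonneg _) (norm_nonneg _), Complex.sq_norm, Complex.sq_norm,
    normSq_add, normSq_sub, hcross]
  ring

theorem norm_add_mul_sq_add_norm_sub_mul_sq {ω : ℂ} (hω : ‖ω‖ = 1) (x y : ℂ) :
    ‖x + ω * y‖ ^ 2 + ‖x - ω * y‖ ^ 2 = 2 * (‖x‖ ^ 2 + ‖y‖ ^ 2) := by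
  have := parallelogram_law_with_norm ℝ x (ω * y)
  rw [norm_mul, hω, one_mul] at this
  linarith

/-- Coefficient estimate for pairs: if `h, g` are analytic on the unit disk with
`|h| + |g| ≤ 1`, then `√(|aₙ|² + |bₙ|²) ≤ 1 − |a₀|² − |b₀|²` for all `n ≥ 1`. -/
theorem bohr_pair_coefficient_bound
    (a b : ℕ → ℂ) (h g : ℂ → ℂ)
    (hh : ∀ z : ℂ, ‖z‖ < 1 → HasSum (fun k : ℕ => a k * z ^ k) (h z))
    (hg : ∀ z : ℂ, ‖z‖ < 1 → HasSum (fun k : ℕ => b k * z ^ k) (g z))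
    (hbound : ∀ z : ℂ, ‖z‖ < 1 → ‖h z‖ + ‖g z‖ ≤ 1) :
    ∀ n : ℕ, 1 ≤ n →
      Real.sqrt (‖a n‖ ^ 2 + ‖b n‖ ^ 2) ≤ 1 - ‖a 0‖ ^ 2 - ‖b 0‖ ^ 2 := by
  intro n hn
  have hwiener : ∀ s : ℂ, ‖s‖ = 1 → ‖a n + s * b n‖ ≤ 1 - ‖a 0 + s * b 0‖ ^ 2 := fun s hs =>
    norm_coeff_le_one_sub_sq (c := fun k => a k + s * b k) (f := fun z => h z + s * g z)
      (fun z hz => by simpa [add_mul, mul_assoc] using (hh z hz).add ((hg z hz).mul_left s))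
      (fun z hz => (norm_add_le _ _).trans (by simpa [hs] using hbound z hz)) (by omega)
  obtain ⟨ω, hω, hbal⟩ := exists_norm_eq_one_norm_add_mul_eq_norm_sub_mul (a n) (b n)
  have hplus := hwiener ω hω
  have hminus : ‖a n - ω * b n‖ ≤ 1 - ‖a 0 - ω * b 0‖ ^ 2 := by
    simpa [sub_eq_add_neg] using hwiener (-ω) (by rwa [norm_neg])
  have hsqrt : Real.sqrt (‖a n‖ ^ 2 + ‖b n‖ ^ 2) = ‖a n + ω * b n‖ := by
    rw [Real.sqrt_eq_iff_eq_sq (by positivity) (norm_nonneg _)]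
    have hpar := norm_add_mul_sq_add_norm_sub_mul_sq hω (a n) (b n)
    rw [← hbal] at hpar
    linarith
  linarith [norm_add_mul_sq_add_norm_sub_mul_sq hω (a 0) (b 0)]
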